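/- Let (C, D, M) be an ST-triple inside a triangulated category T, let X ∈ C and Y ∈ T. Then the canonical map Hom_T(X, Y) → Hom_T(X, σ_M^{≥ -n}(Y)) is an isomorphism for all sufficiently large n; in particular Hom_T(X, Y) ≅ lim_{n∈ℕ} Hom_T(X, σ_M^{≥ -n}(Y)). -/

import Mathlib

open CategoryTheory Limits Pretriangulated

namespace STPaper

variable {T : Type*} [Category T] [Preadditive T] [HasZeroObject T]
  [HasShift T ℤ] [∀ n : ℤ, (CategoryTheory.shiftFunctor T n).Additive] [Pretriangulated T]

/-- The shift of a class of objects. -/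
def shSet (S : Set T) (n : ℤ) : Set T := (CategoryTheory.shiftFunctor T n).obj '' S

/-- The class `Y₁ ∗ Y₂`: objects `Z` fitting in a distinguished triangle
`Y₁ → Z → Y₂ → ΣY₁` with `Y₁ ∈ 𝒴₁` and `Y₂ ∈ 𝒴₂`. -/
def star (Y₁ Y₂ : Set T) : Set T :=
  {Z | ∃ (A B : T) (f : A ⟶ Z) (g : Z ⟶ B) (h : B ⟶ A⟦(1:ℤ)⟧),
    (Triangle.mk f g h ∈ distTriang T) ∧ A ∈ Y₁ ∧ B ∈ Y₂}

/-- The extension closure of a class of objects. -/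
inductive filt (S : Set T) : T → Prop
  | of {X : T} (h : X ∈ S) : filt S X
  | zero {X : T} (h : IsZero X) : filt S X
  | ext {A Z B : T} (f : A ⟶ Z) (g : Z ⟶ B) (h : B ⟶ A⟦(1:ℤ)⟧)
      (hT : Triangle.mk f g h ∈ distTriang T) (hA : filt S A) (hB : filt S B) : filt S Z

/-- The thick subcategory generated by a class of objects. -/
inductive thick (S : Set T) : T → Prop
  | of {X : T} (h : X ∈ S) : thick S X
  | zero {X : T} (h : IsZero X) : thick S X
  | shift {X : T} (hX : thick S X) (n : ℤ) : thick S (X⟦n⟧)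
  | ext {A Z B : T} (f : A ⟶ Z) (g : Z ⟶ B) (h : B ⟶ A⟦(1:ℤ)⟧)
      (hT : Triangle.mk f g h ∈ distTriang T) (hA : thick S A) (hB : thick S B) : thick S Z
  | smd {X Y : T} (i : X ⟶ Y) (r : Y ⟶ X) (hir : i ≫ r = 𝟙 X) (hY : thick S Y) : thick S X

/-- Two classes of objects coincide up to isomorphism. -/
def isoEq (S L : Set T) : Prop :=
  (∀ X ∈ S, ∃ Y ∈ L, Nonempty (X ≅ Y)) ∧ (∀ Y ∈ L, ∃ X ∈ S, Nonempty (X ≅ Y))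

/-- A simple-minded collection. -/
structure IsSMC (S : Set T) : Prop where
  negVanish : ∀ X ∈ S, ∀ Y ∈ S, ∀ n : ℤ, n < 0 → ∀ f : X ⟶ Y⟦n⟧, f = 0
  nonzero : ∀ X ∈ S, ¬ IsZero X
  endo : ∀ X ∈ S, ∀ f : X ⟶ X, f = 0 ∨ IsIso f
  noHom : ∀ X ∈ S, ∀ Y ∈ S, X ≠ Y → ∀ f : X ⟶ Y, f = 0
  generates : ∀ X : T, thick S X

/-- `T^{𝒮,≤0}` for a collection `S`. -/
def leS (S : Set T) : Set T :=
  {X | ∀ n : ℤ, 0 < n → ∀ Y ∈ S, ∀ f : X⟦n⟧ ⟶ Y, f = 0}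

/-- `Σ^{0}Filt(S) ∗ Σ^{-1}Filt(S) ∗ ⋯ ∗ Σ^{-l}Filt(S)`. -/
def geChainS (S : Set T) : ℕ → Set T
  | 0 => {X | filt S X}
  | (l+1) => star (geChainS S l) (shSet {X | filt S X} (-(l+1 : ℤ)))

/-- `T^{𝒮,≥0}`. -/
def geS (S : Set T) : Set T := ⋃ l, geChainS S l

/-- `Σ^{l}Filt(S) ∗ Σ^{l-1}Filt(S) ∗ ⋯ ∗ Filt(S)`. -/
def leChainS (S : Set T) : ℕ → Set T
  | 0 => {X | filt S X}
  | (l+1) => star (shSet {X | filt S X} (l+1 : ℤ)) (leChainS S l)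

/-- A `t`-structure `(Le, Ge) = (T^{≤0}, T^{≥0})` on `T`. -/
structure IsTStr (Le Ge : Set T) : Prop where
  le_shift : ∀ X ∈ Le, X⟦(1:ℤ)⟧ ∈ Le
  ge_shift : ∀ X ∈ Ge, X⟦(-1:ℤ)⟧ ∈ Ge
  hom_zero : ∀ X ∈ Le, ∀ Y ∈ Ge, ∀ f : X ⟶ Y⟦(-1:ℤ)⟧, f = 0
  exhaust : ∀ Z : T, Z ∈ star Le (shSet Ge (-1))

/-- The heart of a pair of classes. -/
def heart (Le Ge : Set T) : Set T := Le ∩ Ge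

/-- A bounded `t`-structure. -/
structure IsBoundedTStr (Le Ge : Set T) : Prop where
  toIsTStr : IsTStr Le Ge
  bddRight : ∀ X : T, ∃ n : ℤ, X⟦n⟧ ∈ Le
  bddLeft : ∀ X : T, ∃ n : ℤ, X⟦n⟧ ∈ Ge

/-- A simple object of the heart `H`: a nonzero object such that in any distinguished
triangle `A → X → B → ΣA` with `A, B ∈ H`, one of `A`, `B` vanishes. -/
def heartSimple (H : Set T) (X : T) : Prop :=
  X ∈ H ∧ ¬ IsZero X ∧ ∀ (A B : T) (f : A ⟶ X) (g : X ⟶ B) (h : B ⟶ A⟦(1:ℤ)⟧),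
    (Triangle.mk f g h ∈ distTriang T) → A ∈ H → B ∈ H → IsZero A ∨ IsZero B

/-- An algebraic `t`-structure: a bounded `t`-structure whose heart is a length category,
i.e. every object of the heart is a finite iterated extension of simple objects of the heart. -/
def IsAlgTStr (Le Ge : Set T) : Prop :=
  IsBoundedTStr Le Ge ∧ ∀ X ∈ heart Le Ge, filt {Y | heartSimple (heart Le Ge) Y} X


section Silting

variable (T) in
/-- A Krull–Schmidt category: every object is a finite biproduct of objects with local
endomorphism rings. -/
def IsKrullSchmidt [HasFiniteBiproducts T] : Prop :=
  ∀ X : T, ∃ (n : ℕ) (f : Fin n → T),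
    (∀ i, IsLocalRing (End (f i))) ∧ Nonempty (X ≅ ⨁ f)

/-- `X` belongs to `add M`: it is a direct summand of a finite direct sum of copies of `M`. -/
def addObj [HasFiniteBiproducts T] (M : T) (X : T) : Prop :=
  ∃ (n : ℕ) (i : X ⟶ ⨁ (fun _ : Fin n => M)) (r : (⨁ (fun _ : Fin n => M)) ⟶ X),
    i ≫ r = 𝟙 X

/-- The subcategory `add M`. -/
def addSet [HasFiniteBiproducts T] (M : T) : Set T := {X | addObj M X}

/-- A silting object of `T`. -/
def IsSiltingObj (M : T) : Prop :=
  (∀ n : ℤ, 0 < n → ∀ f : M ⟶ M⟦n⟧, f = 0) ∧ ∀ X : T, thick {M} X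

/-- A basic object: it has no repeated (nonzero) direct summand. -/
def IsBasic [HasBinaryBiproducts T] (M : T) : Prop :=
  ¬ ∃ (X Y : T), ¬ IsZero X ∧ Nonempty (M ≅ (X ⊞ X) ⊞ Y)

/-- A silting subcategory of `T`. -/
structure IsSiltingSubcat [HasBinaryBiproducts T] (M : Set T) : Prop where
  isoClosed : ∀ {X Y : T}, (X ≅ Y) → X ∈ M → Y ∈ M
  zeroMem : ∀ X : T, IsZero X → X ∈ M
  sumMem : ∀ X ∈ M, ∀ Y ∈ M, (X ⊞ Y) ∈ M
  smdMem : ∀ (X Y : T) (i : X ⟶ Y) (r : Y ⟶ X), i ≫ r = 𝟙 X → Y ∈ M → X ∈ M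
  presilting : ∀ X ∈ M, ∀ Y ∈ M, ∀ n : ℤ, 0 < n → ∀ f : X ⟶ Y⟦n⟧, f = 0
  generates : ∀ X : T, thick M X

/-- `T_{ℳ,≤0} = {X | Hom(ℳ, Σ^{>0} X) = 0}`. -/
def leM (M : Set T) : Set T :=
  {X | ∀ n : ℤ, 0 < n → ∀ Y ∈ M, ∀ f : Y ⟶ X⟦n⟧, f = 0}

/-- `Σ^l ℳ ∗ Σ^{l-1} ℳ ∗ ⋯ ∗ ℳ`. -/
def geChainM (M : Set T) : ℕ → Set T
  | 0 => M
  | (l+1) => star (shSet M (l+1 : ℤ)) (geChainM M l)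

/-- `T_{ℳ,≥0} = ⋃_{l ≥ 0} Σ^l ℳ ∗ ⋯ ∗ ℳ`. -/
def geM (M : Set T) : Set T := ⋃ l, geChainM M l

/-- `ℳ ∗ Σℳ ∗ ⋯ ∗ Σ^l ℳ`. -/
def leChainM (M : Set T) : ℕ → Set T
  | 0 => M
  | (l+1) => star (leChainM M l) (shSet M (l+1 : ℤ))

/-- A co-`t`-structure `(Ge, Le) = (T_{≥0}, T_{≤0})` on `T`. -/
structure IsCotStr [HasBinaryBiproducts T] (Ge Le : Set T) : Prop where
  isoGe : ∀ {X Y : T}, (X ≅ Y) → X ∈ Ge → Y ∈ Ge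
  zeroGe : ∀ X : T, IsZero X → X ∈ Ge
  sumGe : ∀ X ∈ Ge, ∀ Y ∈ Ge, (X ⊞ Y) ∈ Ge
  smdGe : ∀ (X Y : T) (i : X ⟶ Y) (r : Y ⟶ X), i ≫ r = 𝟙 X → Y ∈ Ge → X ∈ Ge
  isoLe : ∀ {X Y : T}, (X ≅ Y) → X ∈ Le → Y ∈ Le
  zeroLe : ∀ X : T, IsZero X → X ∈ Le
  sumLe : ∀ X ∈ Le, ∀ Y ∈ Le, (X ⊞ Y) ∈ Le
  smdLe : ∀ (X Y : T) (i : X ⟶ Y) (r : Y ⟶ X), i ≫ r = 𝟙 X → Y ∈ Le → X ∈ Le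
  ge_shift : ∀ X ∈ Ge, X⟦(-1:ℤ)⟧ ∈ Ge
  le_shift : ∀ X ∈ Le, X⟦(1:ℤ)⟧ ∈ Le
  hom_zero : ∀ X ∈ Ge, ∀ Y ∈ Le, ∀ f : X⟦(-1:ℤ)⟧ ⟶ Y, f = 0
  exhaust : ∀ Z : T, Z ∈ star (shSet Ge (-1)) Le

/-- A bounded co-`t`-structure. -/
structure IsBoundedCot [HasBinaryBiproducts T] (Ge Le : Set T) : Prop where
  toCot : IsCotStr Ge Le
  bddGe : ∀ X : T, ∃ n : ℤ, X⟦n⟧ ∈ Ge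
  bddLe : ∀ X : T, ∃ n : ℤ, X⟦n⟧ ∈ Le

end Silting

section K0

variable (T) in
/-- Relations defining the Grothendieck group of the triangulated category `T`. -/
def triRel : Set (FreeAbelianGroup T) :=
  {x | ∃ Tr : Triangle T, (Tr ∈ distTriang T) ∧
    x = FreeAbelianGroup.of Tr.obj₂ - FreeAbelianGroup.of Tr.obj₁ - FreeAbelianGroup.of Tr.obj₃}

variable (T) in
/-- The Grothendieck group `K₀(T)` of the triangulated category `T`. -/
abbrev K0 : Type _ := FreeAbelianGroup T ⧸ AddSubgroup.closure (triRel T)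

/-- The class of an object of `T` in `K₀(T)`. -/
def K0mk (X : T) : K0 T := QuotientAddGroup.mk (FreeAbelianGroup.of X)

/-- An indecomposable object: nonzero, and it admits no nontrivial idempotent endomorphism. -/
def Indec (X : T) : Prop :=
  ¬ IsZero X ∧ ∀ e : X ⟶ X, e ≫ e = e → e = 0 ∨ e = 𝟙 X

/-- `ι` is a complete set of representatives of the isomorphism classes of indecomposable
objects of `ℳ`. -/
def IndReps (M : Set T) (ι : Set T) : Prop :=
  (∀ X ∈ ι, X ∈ M ∧ Indec X) ∧
  (∀ Y, Y ∈ M → Indec Y → ∃ X ∈ ι, Nonempty (X ≅ Y)) ∧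
  (∀ X ∈ ι, ∀ Y ∈ ι, X ≠ Y → IsEmpty (X ≅ Y))

/-- Relations defining the Grothendieck group of the heart `H`, coming from distinguished
triangles of `T` all of whose vertices lie in `H` (i.e. short exact sequences in `H`). -/
def heartRel (H : Set T) : Set (FreeAbelianGroup ↥H) :=
  {x | ∃ (A Z B : ↥H) (f : (A : T) ⟶ (Z : T)) (g : (Z : T) ⟶ (B : T))
    (h : (B : T) ⟶ (A : T)⟦(1:ℤ)⟧), (Triangle.mk f g h ∈ distTriang T) ∧
      x = FreeAbelianGroup.of Z - FreeAbelianGroup.of A - FreeAbelianGroup.of B}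

/-- The Grothendieck group `K₀(H)` of a heart `H ⊆ T`. -/
abbrev K0Heart (H : Set T) : Type _ := FreeAbelianGroup ↥H ⧸ AddSubgroup.closure (heartRel H)

/-- The class of an object of `H` in `K₀(H)`. -/
def K0Hmk {H : Set T} (X : ↥H) : K0Heart H := QuotientAddGroup.mk (FreeAbelianGroup.of X)

end K0

section STTriple

variable (R : Type*) [CommRing R] [IsArtinianRing R] [CategoryTheory.Linear R T]

/-- The aisle `T_M^{≤ n} = {X | Hom(M, Σ^{> n} X) = 0}`. -/
def tleMn (M : T) (n : ℤ) : Set T :=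
  {X | ∀ k : ℤ, n < k → ∀ f : M ⟶ X⟦k⟧, f = 0}

/-- The co-aisle `T_M^{≥ n} = {X | Hom(M, Σ^{< n} X) = 0}`. -/
def tgeMn (M : T) (n : ℤ) : Set T :=
  {X | ∀ k : ℤ, k < n → ∀ f : M ⟶ X⟦k⟧, f = 0}

/-- The heart `T_M^0` of the `t`-structure associated with a silting object `M`. -/
def heartM (M : T) : Set T := tleMn M 0 ∩ tgeMn M 0

/-- An ST-triple `(C, D, M)` inside `T` (over the commutative artinian base ring `R`). -/
structure IsSTTriple (C D : Set T) (M : T) : Prop where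
  thickC : ∀ X : T, thick C X → X ∈ C
  thickD : ∀ X : T, thick D X → X ∈ D
  memC : M ∈ C
  presilting : ∀ n : ℤ, 0 < n → ∀ f : M ⟶ M⟦n⟧, f = 0
  generates : ∀ X : T, X ∈ C ↔ thick {M} X
  finLength : ∀ X : T, IsFiniteLength R (M ⟶ X)
  tstr : IsTStr (tleMn M 0) (tgeMn M 0)
  exhaustT : ∀ X : T, ∃ n : ℤ, X ∈ tleMn M n
  eqD : ∀ X : T, X ∈ D ↔ ∃ n : ℤ, X ∈ tgeMn M n

variable {R}

/-- `S` is a direct sum of a complete set of representatives of the simple objects of the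
heart `H`. -/
def IsSumOfSimples [HasFiniteBiproducts T] (H : Set T) (S : T) : Prop :=
  ∃ (n : ℕ) (f : Fin n → T),
    (∀ i, heartSimple H (f i)) ∧
    (∀ Y : T, heartSimple H Y → ∃ i, Nonempty (f i ≅ Y)) ∧
    (∀ i j, i ≠ j → IsEmpty (f i ≅ f j)) ∧ Nonempty (S ≅ ⨁ f)

/-- `S` is a complete set of representatives of the isomorphism classes of simple objects
of the heart of the `t`-structure associated with `M`. -/
def heartSimplesReps (M : T) (S : Set T) : Prop :=
  (∀ X ∈ S, heartSimple (heartM M) X) ∧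
  (∀ Y : T, heartSimple (heartM M) Y → ∃ X ∈ S, Nonempty (X ≅ Y)) ∧
  (∀ X ∈ S, ∀ Y ∈ S, X ≠ Y → IsEmpty (X ≅ Y))

/-- A simple-minded collection of the (thick) subcategory `D ⊆ T`. -/
structure IsSMCof (D : Set T) (S : Set T) : Prop where
  subset : S ⊆ D
  negVanish : ∀ X ∈ S, ∀ Y ∈ S, ∀ n : ℤ, n < 0 → ∀ f : X ⟶ Y⟦n⟧, f = 0
  nonzero : ∀ X ∈ S, ¬ IsZero X
  endo : ∀ X ∈ S, ∀ f : X ⟶ X, f = 0 ∨ IsIso f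
  noHom : ∀ X ∈ S, ∀ Y ∈ S, X ≠ Y → ∀ f : X ⟶ Y, f = 0
  generates : ∀ X : T, X ∈ D ↔ thick S X

/-- A silting object of the (thick) subcategory `C ⊆ T`. -/
def IsSiltingOfC (C : Set T) (M : T) : Prop :=
  M ∈ C ∧ (∀ n : ℤ, 0 < n → ∀ f : M ⟶ M⟦n⟧, f = 0) ∧ ∀ X : T, X ∈ C ↔ thick {M} X

end STTriple

end STPaper

/-!
The map `Hom(X, Y) → Hom(X, σ^{≥ -n} Y)` sits in the long exact `Hom(X, -)`-sequence of the
triangle `σ^{≤ -n-1} Y → Y → σ^{≥ -n} Y → Σ σ^{≤ -n-1} Y`, so it is bijective as soon as `X` has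
no nonzero maps into the aisle `T_M^{≤ -n-1}`. For `X` in `C = thick M` this holds for all large
`n`: for `M` itself it is the definition of the aisle, and the objects with no nonzero maps into
some `T_M^{≤ m}` form a thick subcategory. Once the maps are eventually bijective, `Hom(X, Y)` is
also the inverse limit of the `Hom(X, σ^{≥ -n} Y)`.
-/

namespace CategoryTheory.ObjectProperty

lemma leftOrthogonal.of_retract {𝒞 : Type*} [Category 𝒞] [HasZeroMorphisms 𝒞]
    {P : ObjectProperty 𝒞} {X Y : 𝒞} (i : X ⟶ Y) (r : Y ⟶ X) (hir : i ≫ r = 𝟙 X)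
    (hY : P.leftOrthogonal Y) : P.leftOrthogonal X := fun Z f hZ => by
  rw [← Category.id_comp f, ← hir, Category.assoc, hY (r ≫ f) hZ, comp_zero]

end CategoryTheory.ObjectProperty

namespace STPaper

lemma eq_of_le_of_compatible {B : ℕ → Type*} (p : ∀ n, B (n + 1) → B n) {u v : ∀ n, B n}
    (hu : ∀ n, p n (u (n + 1)) = u n) (hv : ∀ n, p n (v (n + 1)) = v n) {m n : ℕ}
    (hmn : m ≤ n) (h : u n = v n) : u m = v m := by
  induction n, hmn using Nat.le_induction with
  | base => exact h
  | succ n _ ih => exact ih (by rw [← hu, ← hv, h])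

lemma bijective_compatible_of_eventually_bijective {A : Type*} {B : ℕ → Type*}
    (p : ∀ n, B (n + 1) → B n) (φ : ∀ n, A → B n) (hφ : ∀ n a, p n (φ (n + 1) a) = φ n a)
    (N : ℕ) (hN : ∀ n, N ≤ n → Function.Bijective (φ n)) :
    Function.Bijective (fun a =>
      (⟨fun n => φ n a, fun n => hφ n a⟩ : {u : ∀ n, B n // ∀ n, p n (u (n + 1)) = u n})) := by
  refine ⟨fun a a' h => (hN N le_rfl).1 (congrFun (congrArg Subtype.val h) N), ?_⟩
  rintro ⟨u, hu⟩
  obtain ⟨a, ha⟩ := (hN N le_rfl).2 (u N)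
  refine ⟨a, Subtype.ext (funext fun m => ?_)⟩
  obtain ⟨a', ha'⟩ := (hN (max m N) (le_max_right _ _)).2 (u (max m N))
  have ha'N : φ N a' = u N :=
    eq_of_le_of_compatible p (u := fun k => φ k a') (hφ · a') hu (le_max_right _ _) ha'
  obtain rfl : a' = a := (hN N le_rfl).1 (ha'N.trans ha.symm)
  exact eq_of_le_of_compatible p (u := fun k => φ k a') (hφ · a') hu (le_max_left _ _) ha'

section Shift

variable {T : Type*} [Category T] [Preadditive T] [HasShift T ℤ]

lemma tleMn_mono {M : T} {m m' : ℤ} (h : m' ≤ m) : tleMn M m' ⊆ tleMn M m :=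
  fun _ hZ k hk f => hZ k (by omega) f

lemma shift_mem_tleMn {M Z : T} {m : ℤ} (hZ : Z ∈ tleMn M m) (j : ℤ) :
    Z⟦j⟧ ∈ tleMn M (m - j) := fun k hk f => by
  have e := (shiftFunctorAdd' T j k (j + k) rfl).app Z
  have h0 : f ≫ e.inv = 0 := hZ (j + k) (by omega) _
  simpa using h0 =≫ e.hom

lemma leftOrthogonal_tleMn_self (M : T) :
    ObjectProperty.leftOrthogonal (· ∈ tleMn M (-1)) M := fun Z f hZ => by
  have h0 : f ≫ (shiftFunctorZero T ℤ).inv.app Z = 0 := hZ 0 (by omega) _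
  simpa using h0 =≫ (shiftFunctorZero T ℤ).hom.app Z

lemma leftOrthogonal_tleMn_anti {M X : T} {m m' : ℤ} (h : m' ≤ m)
    (hX : ObjectProperty.leftOrthogonal (· ∈ tleMn M m) X) :
    ObjectProperty.leftOrthogonal (· ∈ tleMn M m') X :=
  fun _ f hZ => hX f (tleMn_mono h hZ)

lemma leftOrthogonal_tleMn_shift {M X : T} {m : ℤ}
    (hX : ObjectProperty.leftOrthogonal (· ∈ tleMn M m) X) (n : ℤ) :
    ObjectProperty.leftOrthogonal (· ∈ tleMn M (m - n)) (X⟦n⟧) := fun Z f hZ => by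
  obtain ⟨g, rfl⟩ := ((shiftEquiv T n).toAdjunction.homEquiv _ _).symm.surjective f
  have hg : g = 0 := hX g (tleMn_mono (by omega) (shift_mem_tleMn hZ (-n)))
  rw [hg, Adjunction.homEquiv_counit, Functor.map_zero, zero_comp]
  -- the two zeros differ only in typing the source via `(shiftEquiv T n).functor`
  rfl

end Shift

variable {T : Type*} [Category T] [Preadditive T] [HasZeroObject T]
  [HasShift T ℤ] [∀ n : ℤ, (CategoryTheory.shiftFunctor T n).Additive] [Pretriangulated T]

lemma exists_leftOrthogonal_tleMn_of_thick {M X : T} (hX : thick {M} X) :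
    ∃ m, ObjectProperty.leftOrthogonal (· ∈ tleMn M m) X := by
  induction hX with
  | of h => exact ⟨-1, Set.mem_singleton_iff.mp h ▸ leftOrthogonal_tleMn_self M⟩
  | zero h => exact ⟨0, fun _ f _ => h.eq_of_src f 0⟩
  | shift _ n ih =>
      obtain ⟨m, hm⟩ := ih
      exact ⟨m - n, leftOrthogonal_tleMn_shift hm n⟩
  | ext f g h hT _ _ ihA ihB =>
      obtain ⟨mA, hA⟩ := ihA
      obtain ⟨mB, hB⟩ := ihB
      exact ⟨min mA mB, ObjectProperty.ext_of_isTriangulatedClosed₂ _ _ hT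
        (leftOrthogonal_tleMn_anti (min_le_left _ _) hA)
        (leftOrthogonal_tleMn_anti (min_le_right _ _) hB)⟩
  | smd i r hir _ ih =>
      obtain ⟨m, hm⟩ := ih
      exact ⟨m, ObjectProperty.leftOrthogonal.of_retract i r hir hm⟩

lemma bijective_comp_of_distTriang {X Y₁ Y Y₂ : T} {a : Y₁ ⟶ Y} {b : Y ⟶ Y₂}
    {c : Y₂ ⟶ Y₁⟦(1:ℤ)⟧} (hT : Triangle.mk a b c ∈ distTriang T)
    (h₁ : ∀ f : X ⟶ Y₁, f = 0) (h₂ : ∀ f : X ⟶ Y₁⟦(1:ℤ)⟧, f = 0) :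
    Function.Bijective (fun f : X ⟶ Y => f ≫ b) := by
  refine ⟨fun u v huv => ?_, fun g => ?_⟩
  · have h0 : (u - v) ≫ b = 0 := by rw [Preadditive.sub_comp, sub_eq_zero]; exact huv
    obtain ⟨g, hg⟩ := Triangle.coyoneda_exact₂ _ hT (u - v) h0
    rw [← sub_eq_zero, hg, h₁ g]
    exact zero_comp
  · obtain ⟨f, hf⟩ := Triangle.coyoneda_exact₃ _ hT g (h₂ _)
    exact ⟨f, hf.symm⟩

lemma bijective_comp_of_leftOrthogonal_tleMn {M X Y₁ Y Y₂ : T} {a : Y₁ ⟶ Y} {b : Y ⟶ Y₂}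
    {c : Y₂ ⟶ Y₁⟦(1:ℤ)⟧} {m m' : ℤ} (hX : ObjectProperty.leftOrthogonal (· ∈ tleMn M m) X)
    (hT : Triangle.mk a b c ∈ distTriang T) (hY₁ : Y₁ ∈ tleMn M m') (h : m' ≤ m) :
    Function.Bijective (fun f : X ⟶ Y => f ≫ b) :=
  bijective_comp_of_distTriang hT (fun f => hX f (tleMn_mono h hY₁))
    (fun f => hX f (tleMn_mono (by omega) (shift_mem_tleMn hY₁ 1)))

/-- for an ST-triple `(C, D, M)`, `X ∈ C` and `Y ∈ T`, the canonical map
`Hom(X, Y) → Hom(X, σ_M^{≥ -n} Y)` is bijective for all sufficiently large `n`; in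
particular `Hom(X, Y)` is the inverse limit of the `Hom(X, σ_M^{≥ -n} Y)`. -/
theorem stmt13 {R : Type*} [CommRing R] [CategoryTheory.Linear R T]
    (C D : Set T) (M : T) (hST : IsSTTriple R C D M)
    (X : T) (hX : X ∈ C) (Y : T) :
    (∃ N : ℤ, ∀ n : ℤ, N ≤ n →
      ∀ (Y₁ Y₂ : T) (a : Y₁ ⟶ Y) (b : Y ⟶ Y₂) (c : Y₂ ⟶ Y₁⟦(1:ℤ)⟧),
        (Triangle.mk a b c ∈ distTriang T) → Y₁ ∈ tleMn M (-n-1) → Y₂ ∈ tgeMn M (-n) →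
        Function.Bijective (fun f : X ⟶ Y => f ≫ b)) ∧
    (∀ (Y₁ Y₂ : ℕ → T) (a : ∀ n, Y₁ n ⟶ Y) (b : ∀ n, Y ⟶ Y₂ n)
      (c : ∀ n, Y₂ n ⟶ (Y₁ n)⟦(1:ℤ)⟧),
      (∀ n, Triangle.mk (a n) (b n) (c n) ∈ distTriang T) →
      (∀ n : ℕ, Y₁ n ∈ tleMn M (-(n:ℤ)-1)) → (∀ n : ℕ, Y₂ n ∈ tgeMn M (-(n:ℤ))) →
      ∀ (p : ∀ n : ℕ, Y₂ (n+1) ⟶ Y₂ n) (hp : ∀ n, b (n+1) ≫ p n = b n),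
      Function.Bijective
        (fun f : X ⟶ Y =>
          (⟨fun n => f ≫ b n, fun n => by rw [Category.assoc, hp]⟩ :
            {u : ∀ n : ℕ, X ⟶ Y₂ n // ∀ n, u (n+1) ≫ p n = u n}))) := by
  obtain ⟨m, hm⟩ := exists_leftOrthogonal_tleMn_of_thick ((hST.generates X).mp hX)
  refine ⟨⟨-m - 1, fun n hn _ _ _ _ _ hT hY₁ _ =>
    bijective_comp_of_leftOrthogonal_tleMn hm hT hY₁ (by omega)⟩, ?_⟩
  intro Y₁ Y₂ a b c hT hY₁ _ p hp
  exact bijective_compatible_of_eventually_bijective (fun n g => g ≫ p n) (fun n f => f ≫ b n)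
    (fun n f => by rw [Category.assoc, hp]) (-m - 1).toNat
    (fun n hn => bijective_comp_of_leftOrthogonal_tleMn hm (hT n) (hY₁ n) (by omega))

end STPaper
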